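/- Conservation of the Nitsche energy for the symmetric Nitsche semi-discretization: let γ > 0, N ≥ 1, and let t ↦ u(·,t) be a C² (in time) curve of real polynomials in x of degree at most N with u(−1,t) = 0, satisfying ∫_{-1}^{1} u_tt(x,t)ψ(x) dx + ∫_{-1}^{1} u_x(x,t)ψ'(x) dx − u_x(1,t)ψ(1) − u(1,t)ψ'(1) + γN²u(1,t)ψ(1) = 0 for every polynomial ψ of degree at most N with ψ(−1) = 0 and every t. Then the Nitsche energy E_{N,γ}(u(t)) = (1/2)∫_{-1}^{1}(u_t(x,t)² + u_x(x,t)²) dx + ((γ/2)N²u(1,t) − u_x(1,t))·u(1,t) is constant in t. -/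

import Mathlib

/-!
Testing the weak formulation with `ψ = u_t(·, t)` produces exactly the time derivative of the
energy: the two volume terms are `½ d/dt ∫ (u_t² + u_x²)`, and the symmetric boundary terms
`- u_x(1) u_t(1) - u(1) u_xt(1) + γN² u(1) u_t(1)` are the derivative of the boundary part.

Differentiating under the integral is legitimate because everything is finite dimensional:
a polynomial of degree `≤ n` is the Lagrange interpolant of its values at `n + 1` nodes, so a
curve of such polynomials is a fixed finite combination of basis polynomials with coefficients
`u(j, t)`, which are differentiable in `t` by hypothesis. The same expansion shows that the
pointwise time derivative of such a curve is again a polynomial of degree `≤ n`.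
-/

open Polynomial MeasureTheory Finset

section Coordinates

variable {ι : Type*} [Fintype ι] {α β : ℝ}

theorem integral_sum_mul_sum {F G : ι → ℝ → ℝ} (hF : ∀ i, Continuous (F i))
    (hG : ∀ j, Continuous (G j)) (b c : ι → ℝ) :
    ∫ x in α..β, (∑ i, b i * F i x) * ∑ j, c j * G j x
      = ∑ i, ∑ j, b i * c j * ∫ x in α..β, F i x * G j x := by
  have hprod (x : ℝ) : (∑ i, b i * F i x) * ∑ j, c j * G j x
      = ∑ i, ∑ j, b i * c j * (F i x * G j x) := by
    rw [sum_mul_sum]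
    exact sum_congr rfl fun i _ => sum_congr rfl fun j _ => by ring
  simp only [hprod]
  rw [intervalIntegral.integral_finsetSum fun i _ => ?_]
  · refine sum_congr rfl fun i _ => ?_
    rw [intervalIntegral.integral_finsetSum fun j _ => ?_]
    · exact sum_congr rfl fun j _ => intervalIntegral.integral_const_mul _ _
    · exact Continuous.intervalIntegrable (by fun_prop) _ _
  · exact Continuous.intervalIntegrable (by fun_prop) _ _

theorem hasDerivAt_integral_sq_sum {F : ι → ℝ → ℝ} (hF : ∀ i, Continuous (F i))
    {a : ι → ℝ → ℝ} {a' : ι → ℝ} {t : ℝ} (ha : ∀ i, HasDerivAt (a i) (a' i) t) :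
    HasDerivAt (fun τ => ∫ x in α..β, (∑ i, a i τ * F i x) ^ 2)
      (2 * ∫ x in α..β, (∑ i, a' i * F i x) * ∑ i, a i t * F i x) t := by
  have hexpand := integral_sum_mul_sum (α := α) (β := β) hF hF
  rw [two_mul]
  nth_rewrite 2 [intervalIntegral.integral_congr fun x _ => mul_comm _ _]
  simp only [sq, hexpand]
  refine (HasDerivAt.fun_sum fun i _ => HasDerivAt.fun_sum fun j _ =>
    ((ha i).mul (ha j)).mul_const (∫ x in α..β, F i x * F j x)).congr_deriv ?_
  simp only [add_mul, sum_add_distrib]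

end Coordinates

section NodalBasis

variable {n : ℕ}

theorem injOn_natCast_fin (n : ℕ) :
    Set.InjOn (fun i : Fin (n + 1) => (i : ℝ)) (univ : Finset (Fin (n + 1))) :=
  (Nat.cast_injective.comp Fin.val_injective).injOn

-- Any `n + 1` distinct nodes would do; we interpolate at `0, 1, …, n`.
noncomputable def nodalBasis (n : ℕ) (j : Fin (n + 1)) : ℝ[X] :=
  Lagrange.basis univ (fun i : Fin (n + 1) => (i : ℝ)) j

theorem eq_sum_nodalBasis {p : ℝ[X]} (hp : p.degree ≤ n) :
    p = ∑ j : Fin (n + 1), C (p.eval (j : ℝ)) * nodalBasis n j := by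
  have hlt : p.degree < #(univ : Finset (Fin (n + 1))) := by
    rw [card_univ, Fintype.card_fin]
    exact hp.trans_lt (by exact_mod_cast n.lt_succ_self)
  exact (Lagrange.eq_interpolate (injOn_natCast_fin n) hlt).trans
    (Lagrange.interpolate_apply _ _ _)

theorem eval_eq_sum_nodalBasis {p : ℝ[X]} (hp : p.degree ≤ n) (x : ℝ) :
    p.eval x = ∑ j : Fin (n + 1), p.eval (j : ℝ) * (nodalBasis n j).eval x := by
  conv_lhs => rw [eq_sum_nodalBasis hp]
  simp only [eval_finsetSum, eval_mul, eval_C]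

theorem degree_sum_nodalBasis_le (c : Fin (n + 1) → ℝ) :
    (∑ j, C (c j) * nodalBasis n j).degree ≤ n := by
  simpa [nodalBasis] using Lagrange.degree_interpolate_le (r := c) (injOn_natCast_fin n)

variable {p : ℝ → ℝ[X]} {t : ℝ}

theorem hasDerivAt_linearMap_apply (hp : ∀ τ, (p τ).degree ≤ n) (Λ : ℝ[X] →ₗ[ℝ] ℝ)
    {c : Fin (n + 1) → ℝ}
    (hc : ∀ j : Fin (n + 1), HasDerivAt (fun τ => (p τ).eval (j : ℝ)) (c j) t) :
    HasDerivAt (fun τ => Λ (p τ)) (∑ j, c j * Λ (nodalBasis n j)) t := by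
  have hexpand (τ : ℝ) :
      Λ (p τ) = ∑ j : Fin (n + 1), (p τ).eval (j : ℝ) * Λ (nodalBasis n j) := by
    conv_lhs => rw [eq_sum_nodalBasis (hp τ)]
    simp only [map_sum, ← smul_eq_C_mul, map_smul, smul_eq_mul]
  rw [funext hexpand]
  exact HasDerivAt.fun_sum fun j _ => (hc j).mul_const _

theorem exists_eval_eq_of_hasDerivAt (hp : ∀ τ, (p τ).degree ≤ n) {f : ℝ → ℝ}
    (hf : ∀ x, HasDerivAt (fun τ => (p τ).eval x) (f x) t) :
    ∃ q : ℝ[X], q.degree ≤ n ∧ ∀ x, f x = q.eval x := by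
  refine ⟨∑ j : Fin (n + 1), C (f (j : ℝ)) * nodalBasis n j, degree_sum_nodalBasis_le _,
    fun x => (hf x).unique ?_⟩
  refine (hasDerivAt_linearMap_apply hp (leval x) fun j : Fin (n + 1) => hf j).congr_deriv ?_
  simp only [leval_apply, eval_finsetSum, eval_mul, eval_C]

variable {q : ℝ[X]}

theorem hasDerivAt_derivative_eval (hp : ∀ τ, (p τ).degree ≤ n) (hq : q.degree ≤ n)
    (hpq : ∀ x, HasDerivAt (fun τ => (p τ).eval x) (q.eval x) t) (x : ℝ) :
    HasDerivAt (fun τ => (p τ).derivative.eval x) (q.derivative.eval x) t := by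
  refine (hasDerivAt_linearMap_apply hp ((leval x).comp derivative)
    fun j : Fin (n + 1) => hpq j).congr_deriv ?_
  conv_rhs => rw [eq_sum_nodalBasis hq]
  simp only [LinearMap.comp_apply, leval_apply, derivative_sum, derivative_C_mul, eval_finsetSum,
    eval_mul, eval_C]

theorem hasDerivAt_integral_eval_sq (hp : ∀ τ, (p τ).degree ≤ n) (hq : q.degree ≤ n)
    (hpq : ∀ x, HasDerivAt (fun τ => (p τ).eval x) (q.eval x) t) (α β : ℝ) :
    HasDerivAt (fun τ => ∫ x in α..β, (p τ).eval x ^ 2)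
      (2 * ∫ x in α..β, q.eval x * (p t).eval x) t := by
  have hsum := hasDerivAt_integral_sq_sum (α := α) (β := β)
    (fun j => (nodalBasis n j).continuous) (a := fun j τ => (p τ).eval (j : ℝ)) fun j => hpq j
  convert hsum using 1
  · exact funext fun τ => intervalIntegral.integral_congr fun x _ => by
      rw [eval_eq_sum_nodalBasis (hp τ) x]
  · exact congrArg _ (intervalIntegral.integral_congr fun x _ => by
      rw [eval_eq_sum_nodalBasis hq x, eval_eq_sum_nodalBasis (hp t) x])

end NodalBasis

-- `p`, `q`, `r` stand for `u(·, t)`, `u_t(·, t)`, `u_tt(·, t)`; `ψ` is the test polynomial.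

noncomputable def nitscheEnergy (γ : ℝ) (N : ℕ) (p q : ℝ[X]) : ℝ :=
  (1 / 2) * (∫ x in (-1 : ℝ)..1, (q.eval x ^ 2 + p.derivative.eval x ^ 2))
    + ((γ / 2) * (N : ℝ) ^ 2 * p.eval 1 - p.derivative.eval 1) * p.eval 1

noncomputable def nitscheForm (γ : ℝ) (N : ℕ) (p r ψ : ℝ[X]) : ℝ :=
  (∫ x in (-1 : ℝ)..1, r.eval x * ψ.eval x)
    + (∫ x in (-1 : ℝ)..1, p.derivative.eval x * ψ.derivative.eval x)
    - p.derivative.eval 1 * ψ.eval 1 - p.eval 1 * ψ.derivative.eval 1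
    + γ * (N : ℝ) ^ 2 * p.eval 1 * ψ.eval 1

theorem hasDerivAt_nitscheEnergy {n : ℕ} (γ : ℝ) (N : ℕ) {p q : ℝ → ℝ[X]} {r : ℝ[X]}
    {t : ℝ}
    (hp : ∀ τ, (p τ).degree ≤ n) (hq : ∀ τ, (q τ).degree ≤ n) (hr : r.degree ≤ n)
    (hpq : ∀ x, HasDerivAt (fun τ => (p τ).eval x) ((q t).eval x) t)
    (hqr : ∀ x, HasDerivAt (fun τ => (q τ).eval x) (r.eval x) t) :
    HasDerivAt (fun τ => nitscheEnergy γ N (p τ) (q τ)) (nitscheForm γ N (p t) r (q t)) t := by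
  have hkinetic := hasDerivAt_integral_eval_sq hq hr hqr (-1) 1
  have hpotential := hasDerivAt_integral_eval_sq (fun τ => degree_derivative_le.trans (hp τ))
    (degree_derivative_le.trans (hq t)) (hasDerivAt_derivative_eval hp (hq t) hpq) (-1) 1
  have hboundary := (((hpq 1).const_mul (γ / 2 * N ^ 2)).fun_sub
    (hasDerivAt_derivative_eval hp (hq t) hpq 1)).fun_mul (hpq 1)
  have hsplit (τ : ℝ) :
      ∫ x in (-1 : ℝ)..1, ((q τ).eval x ^ 2 + (p τ).derivative.eval x ^ 2)
        = (∫ x in (-1 : ℝ)..1, (q τ).eval x ^ 2)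
          + ∫ x in (-1 : ℝ)..1, (p τ).derivative.eval x ^ 2 :=
    intervalIntegral.integral_add (Continuous.intervalIntegrable (by fun_prop) _ _)
      (Continuous.intervalIntegrable (by fun_prop) _ _)
  simp only [nitscheEnergy, hsplit]
  refine (((hkinetic.add hpotential).const_mul (1 / 2)).add hboundary).congr_deriv ?_
  rw [intervalIntegral.integral_congr fun x _ => mul_comm ((q t).derivative.eval x) _]
  simp only [nitscheForm]
  ring

theorem nitsche_energy_conservation
    (γ : ℝ) (N : ℕ)
    (u ut utt : ℝ → ℝ → ℝ)
    -- for each t, u(·,t) is a polynomial of degree ≤ N vanishing at x = −1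
    (hupoly : ∀ t : ℝ, ∃ p : Polynomial ℝ, p.degree ≤ N ∧ ∀ x : ℝ, u x t = p.eval x)
    (hbc : ∀ t : ℝ, u (-1) t = 0)
    -- ut, utt are the first and second time derivatives of u (C² in time)
    (hut : ∀ x t : ℝ, HasDerivAt (fun τ => u x τ) (ut x t) t)
    (hutt : ∀ x t : ℝ, HasDerivAt (fun τ => ut x τ) (utt x t) t)
    -- the symmetric Nitsche weak formulation
    (hweak : ∀ ψ : Polynomial ℝ, ψ.degree ≤ N → ψ.eval (-1) = 0 → ∀ t : ℝ,
      (∫ x in (-1 : ℝ)..1, utt x t * ψ.eval x)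
        + (∫ x in (-1 : ℝ)..1, deriv (fun ξ => u ξ t) x * ψ.derivative.eval x)
        - deriv (fun ξ => u ξ t) 1 * ψ.eval 1
        - u 1 t * ψ.derivative.eval 1
        + γ * (N : ℝ) ^ 2 * u 1 t * ψ.eval 1 = 0) :
    ∀ s t : ℝ,
      (1 / 2) * (∫ x in (-1 : ℝ)..1, ((ut x t) ^ 2 + (deriv (fun ξ => u ξ t) x) ^ 2))
          + ((γ / 2) * (N : ℝ) ^ 2 * u 1 t - deriv (fun ξ => u ξ t) 1) * u 1 t
        = (1 / 2) * (∫ x in (-1 : ℝ)..1, ((ut x s) ^ 2 + (deriv (fun ξ => u ξ s) x) ^ 2))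
          + ((γ / 2) * (N : ℝ) ^ 2 * u 1 s - deriv (fun ξ => u ξ s) 1) * u 1 s := by
  choose p hpdeg hp using hupoly
  have hpt (x t : ℝ) : HasDerivAt (fun τ => (p τ).eval x) (ut x t) t := by
    simpa only [hp] using hut x t
  choose q hqdeg hq using fun t => exists_eval_eq_of_hasDerivAt hpdeg (hpt · t)
  have hqt (x t : ℝ) : HasDerivAt (fun τ => (q τ).eval x) (utt x t) t := by
    simpa only [hq] using hutt x t
  choose r hrdeg hr using fun t => exists_eval_eq_of_hasDerivAt hqdeg (hqt · t)
  have hconst (t : ℝ) : HasDerivAt (fun τ => nitscheEnergy γ N (p τ) (q τ)) 0 t := by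
    have hq_bc : (q t).eval (-1) = 0 := by
      rw [← hq]
      exact (hut (-1) t).unique (by simpa only [hbc] using hasDerivAt_const t (0 : ℝ))
    have hw := hweak (q t) (hqdeg t) hq_bc t
    simp only [hp, hr, Polynomial.deriv] at hw
    exact (hasDerivAt_nitscheEnergy γ N hpdeg hqdeg (hrdeg t)
      (by simpa only [hq] using (hpt · t)) (by simpa only [hr] using (hqt · t))).congr_deriv hw
  intro s t
  simp only [hp, hq, Polynomial.deriv]
  exact is_const_of_deriv_eq_zero (fun τ => (hconst τ).differentiableAt)
    (fun τ => (hconst τ).deriv) t s
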